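/- Let N ⊂ GL(n,K) be the group of upper unitriangular matrices acting on strictly upper triangular matrices m by conjugation X ↦ g⁻¹ X g. For the (2,4,2) nilradical m ⊂ gl(8,K), the polynomial L11 = x_{23}x_{37} + x_{24}x_{47} + x_{25}x_{57} + x_{26}x_{67} on m is invariant under the adjoint action of N, i.e., L11(g⁻¹ X g) = L11(X) for all g ∈ N and all X in the nilradical. -/
import Mathlib


noncomputable section

open Matrix

variable {K : Type*} [Field K] [CharZero K]

/-- membership in the (2,4,2) nilradical of gl(8,K) (indices 0-based):
entries vanish outside rows 1-2 × cols 3-8 and rows 3-6 × cols 7-8 (1-based). -/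
def InNil242 (Y : Matrix (Fin 8) (Fin 8) K) : Prop :=
  ∀ i j : Fin 8,
    ¬ ((i.val < 2 ∧ 2 ≤ j.val) ∨ (2 ≤ i.val ∧ i.val < 6 ∧ 6 ≤ j.val)) → Y i j = 0

/-- upper unitriangular matrices. -/
def IsUnitriangular {n : ℕ} (g : Matrix (Fin n) (Fin n) K) : Prop :=
  (∀ i, g i i = 1) ∧ ∀ i j : Fin n, j < i → g i j = 0

def fM1 (Y : Matrix (Fin 8) (Fin 8) K) : K := Y 1 2
def fM2 (Y : Matrix (Fin 8) (Fin 8) K) : K := Y 0 2 * Y 1 3 - Y 0 3 * Y 1 2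
def fN1 (Y : Matrix (Fin 8) (Fin 8) K) : K := Y 5 6
def fN2 (Y : Matrix (Fin 8) (Fin 8) K) : K := Y 4 6 * Y 5 7 - Y 4 7 * Y 5 6
def fL11 (Y : Matrix (Fin 8) (Fin 8) K) : K :=
  Y 1 2 * Y 2 6 + Y 1 3 * Y 3 6 + Y 1 4 * Y 4 6 + Y 1 5 * Y 5 6
def fL12 (Y : Matrix (Fin 8) (Fin 8) K) : K :=
  (Y 0 2 * Y 1 3 - Y 0 3 * Y 1 2) * Y 3 6 +
  (Y 0 2 * Y 1 4 - Y 0 4 * Y 1 2) * Y 4 6 +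
  (Y 0 2 * Y 1 5 - Y 0 5 * Y 1 2) * Y 5 6
def fL21 (Y : Matrix (Fin 8) (Fin 8) K) : K :=
  Y 1 2 * (Y 2 6 * Y 5 7 - Y 2 7 * Y 5 6) +
  Y 1 3 * (Y 3 6 * Y 5 7 - Y 3 7 * Y 5 6) +
  Y 1 4 * (Y 4 6 * Y 5 7 - Y 4 7 * Y 5 6)
def fL22 (Y : Matrix (Fin 8) (Fin 8) K) : K :=
  (Y 0 2 * Y 1 3 - Y 0 3 * Y 1 2) * (Y 3 6 * Y 5 7 - Y 3 7 * Y 5 6) +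
  (Y 0 2 * Y 1 4 - Y 0 4 * Y 1 2) * (Y 4 6 * Y 5 7 - Y 4 7 * Y 5 6)
def fD (Y : Matrix (Fin 8) (Fin 8) K) : K :=
  (Y * Y) 0 6 * (Y * Y) 1 7 - (Y * Y) 0 7 * (Y * Y) 1 6


set_option linter.unusedSectionVars false

lemma unit_bt {n : ℕ} {g : Matrix (Fin n) (Fin n) K} (hg : IsUnitriangular g) :
    BlockTriangular g id := fun i j h => hg.2 i j h

lemma unit_det {n : ℕ} {g : Matrix (Fin n) (Fin n) K} (hg : IsUnitriangular g) :
    g.det = 1 := by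
  rw [Matrix.det_of_upperTriangular (unit_bt hg)]; simp [hg.1]

lemma unit_inv {n : ℕ} {g : Matrix (Fin n) (Fin n) K} (hg : IsUnitriangular g) :
    IsUnitriangular g⁻¹ := by
  have hbt := unit_bt hg
  have hdet := unit_det hg
  have : Invertible g := g.invertibleOfIsUnitDet (by simp [hdet])
  have hbti : BlockTriangular g⁻¹ id := Matrix.blockTriangular_inv_of_blockTriangular hbt
  refine ⟨fun i => ?_, fun i j h => hbti h⟩
  have h1 : (g * g⁻¹) i i = 1 := by rw [Matrix.mul_nonsing_inv g (by simp [hdet])]; simp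
  rw [Matrix.mul_apply, Finset.sum_eq_single i] at h1
  · simpa [hg.1 i] using h1
  · intro b _ hb
    rcases lt_or_gt_of_ne hb with hlt | hgt
    · rw [hg.2 i b hlt, zero_mul]
    · rw [hbti hgt, mul_zero]
  · simp

lemma conj_nil {g Y : Matrix (Fin 8) (Fin 8) K}
    (hg : IsUnitriangular g) (hY : InNil242 Y) : InNil242 (g⁻¹ * Y * g) := by
  have hi := unit_inv hg
  intro i j hij
  rw [Matrix.mul_apply]
  apply Finset.sum_eq_zero
  intro b _
  by_cases hbj : g b j = 0
  · rw [hbj, mul_zero]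
  have hbj' : (b : ℕ) ≤ (j : ℕ) := by
    by_contra h
    exact hbj (hg.2 b j (Fin.lt_def.mpr (by omega)))
  rw [Matrix.mul_apply]
  rw [Finset.sum_eq_zero, zero_mul]
  intro a _
  by_cases hab : Y a b = 0
  · rw [hab, mul_zero]
  by_cases hia : g⁻¹ i a = 0
  · rw [hia, zero_mul]
  exfalso
  have hYab : ((a:ℕ) < 2 ∧ 2 ≤ (b:ℕ)) ∨ (2 ≤ (a:ℕ) ∧ (a:ℕ) < 6 ∧ 6 ≤ (b:ℕ)) := by
    by_contra h; exact hab (hY a b h)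
  have hia' : (i : ℕ) ≤ (a : ℕ) := by
    by_contra h
    exact hia (hi.2 i a (Fin.lt_def.mpr (by omega)))
  exact hij (by omega)

lemma fL11_eq {X : Matrix (Fin 8) (Fin 8) K} (hX : InNil242 X) :
    fL11 X = (X * X) 1 6 := by
  rw [Matrix.mul_apply, Fin.sum_univ_eight, fL11]
  have h0 : X 1 0 = 0 := hX 1 0 (by decide)
  have h1 : X 1 1 = 0 := hX 1 1 (by decide)
  have h6 : X 6 6 = 0 := hX 6 6 (by decide)
  have h7 : X 7 6 = 0 := hX 7 6 (by decide)
  rw [h0, h1, h6, h7]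
  ring

/-- L11 is invariant under conjugation by the unitriangular group. -/
theorem L11_N_invariant (g Y : Matrix (Fin 8) (Fin 8) K)
    (hg : IsUnitriangular g) (hY : InNil242 Y) :
    fL11 (g⁻¹ * Y * g) = fL11 Y := by
  have hdet := unit_det hg
  have hZ := conj_nil hg hY
  rw [fL11_eq hZ, fL11_eq hY]
  have hgg : g * g⁻¹ = 1 := Matrix.mul_nonsing_inv g (by simp [hdet])
  have hsq : (g⁻¹ * Y * g) * (g⁻¹ * Y * g) = g⁻¹ * (Y * Y) * g := by
    calc (g⁻¹ * Y * g) * (g⁻¹ * Y * g) = g⁻¹ * Y * (g * g⁻¹) * Y * g := by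
          noncomm_ring
      _ = g⁻¹ * (Y * Y) * g := by rw [hgg]; noncomm_ring
  rw [hsq]
  have hi := unit_inv hg
  have hYY : ∀ a b : Fin 8, ¬ ((a:ℕ) < 2 ∧ 6 ≤ (b:ℕ)) → (Y * Y) a b = 0 := by
    intro a b hab
    rw [Matrix.mul_apply]
    apply Finset.sum_eq_zero
    intro c _
    by_cases h1 : Y a c = 0
    · rw [h1, zero_mul]
    by_cases h2 : Y c b = 0
    · rw [h2, mul_zero]
    exfalso
    have hac : ((a:ℕ) < 2 ∧ 2 ≤ (c:ℕ)) ∨ (2 ≤ (a:ℕ) ∧ (a:ℕ) < 6 ∧ 6 ≤ (c:ℕ)) := by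
      by_contra h; exact h1 (hY a c h)
    have hcb : ((c:ℕ) < 2 ∧ 2 ≤ (b:ℕ)) ∨ (2 ≤ (c:ℕ) ∧ (c:ℕ) < 6 ∧ 6 ≤ (b:ℕ)) := by
      by_contra h; exact h2 (hY c b h)
    exact hab (by omega)
  rw [Matrix.mul_apply, Finset.sum_eq_single (6 : Fin 8)]
  · rw [hg.1 6, mul_one, Matrix.mul_apply, Finset.sum_eq_single (1 : Fin 8)]
    · rw [hi.1 1, one_mul]
    · intro a _ ha
      rcases lt_or_gt_of_ne ha with hlt | hgt
      · rw [hi.2 1 a hlt, zero_mul]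
      · have h2 : (1:ℕ) < (a:ℕ) := Fin.lt_def.mp hgt
        rw [hYY a 6 (by omega), mul_zero]
    · simp
  · intro b _ hb
    rcases lt_or_gt_of_ne hb with hlt | hgt
    · have hb6 : (b:ℕ) < 6 := Fin.lt_def.mp hlt
      rw [Matrix.mul_apply, Finset.sum_eq_zero, zero_mul]
      intro a _
      rw [hYY a b (by omega), mul_zero]
    · rw [hg.2 b 6 hgt, mul_zero]
  · simp

end
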